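/- Suppose y₀ satisfies the Euler–Lagrange equation f_y(x, y₀(x), y₀'(x)) − (d/dx)[f_z(x, y₀(x), y₀'(x))] = 0 for all x ∈ [a,b]. If p > 0 and q ≥ 0, then there exists ε > 0 such that for every y ∈ C¹[a,b] with y(a)=y₀(a), y(b)=y₀(b) and max_{x∈[a,b]} max(|y(x)−y₀(x)|, |y'(x)−y₀'(x)|) < ε one has Φ(y) − Φ(y₀) ≥ (π²·p / (2(π² + 16(b−a)²)))·‖y − y₀‖²_{H¹[a,b]}. -/

import Mathlib

open Set MeasureTheory intervalIntegral

/-- Partial derivative of `f` with respect to the second argument `y`. -/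
noncomputable def fy (f : ℝ → ℝ → ℝ → ℝ) (x y z : ℝ) : ℝ :=
  deriv (fun u => f x u z) y

/-- Partial derivative of `f` with respect to the third argument `z`. -/
noncomputable def fz (f : ℝ → ℝ → ℝ → ℝ) (x y z : ℝ) : ℝ :=
  deriv (fun u => f x y u) z

/-- Second partial derivative `f_{yy}`. -/
noncomputable def fyy (f : ℝ → ℝ → ℝ → ℝ) (x y z : ℝ) : ℝ :=
  deriv (fun u => fy f x u z) y

/-- Mixed second partial derivative `f_{yz}`. -/
noncomputable def fyz (f : ℝ → ℝ → ℝ → ℝ) (x y z : ℝ) : ℝ :=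
  deriv (fun u => fz f x u z) y

/-- Second partial derivative `f_{zz}`. -/
noncomputable def fzz (f : ℝ → ℝ → ℝ → ℝ) (x y z : ℝ) : ℝ :=
  deriv (fun u => fz f x y u) z

/-- The Euler–Lagrange variational functional `Φ(y) = ∫_a^b f(x, y, y') dx`. -/
noncomputable def Phi (f : ℝ → ℝ → ℝ → ℝ) (a b : ℝ) (y : ℝ → ℝ) : ℝ :=
  ∫ x in a..b, f x (y x) (deriv y x)

/-- The square of the Sobolev `H¹[a,b]` norm of `y`. -/
noncomputable def H1normSq (a b : ℝ) (y : ℝ → ℝ) : ℝ :=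
  ∫ x in a..b, ((y x) ^ 2 + (deriv y x) ^ 2)

/-!
Write `u = y - y₀`. Taylor's formula around the jet `(x, y₀ x, y₀' x)`, with the second
derivative of `f` uniformly continuous near the compact jet curve, shows that once `u` and `u'`
are uniformly small, `f(x, y, y') - f(x, y₀, y₀')` is at least
`f_y u + f_z u' + (f_yy u² + 2 f_yz u u' + f_zz u'² - η (u² + u'²)) / 2`.
By the Euler–Lagrange equation, `f_y u + f_z u' + f_yz u u'` differs from the derivative of
`f_z u + f_yz u² / 2` only by `(f_yz)' u² / 2`, and that derivative integrates to zero. Hence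
`Φ(y) - Φ(y₀) ≥ ((q - η) ∫ u² + (p - η) ∫ u'²) / 2`, and the Poincaré inequality
`∫ u² ≤ (b - a)² ∫ u'²` yields the claim: as `π² < 16`, the constant of the theorem is strictly
below `p / (2 (1 + (b - a)²))`, which leaves room for a positive `η`.
-/

theorem add_add_half_le_of_le_deriv2 {g g' g'' : ℝ → ℝ} {m : ℝ}
    (hg : ∀ t, HasDerivAt g (g' t) t) (hg' : ∀ t, HasDerivAt g' (g'' t) t)
    (hm : ∀ t ∈ Icc (0 : ℝ) 1, m ≤ g'' t) :
    g 0 + g' 0 + m / 2 ≤ g 1 := by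
  have hk' : ∀ t, HasDerivAt (fun t => g' t - g' 0 - m * t) (g'' t - m) t := fun t =>
    (((hg' t).sub_const (g' 0)).sub ((hasDerivAt_id' t).const_mul m)).congr_deriv (by ring)
  have hk : ∀ t, HasDerivAt (fun t => g t - g 0 - g' 0 * t - m / 2 * t ^ 2)
      (g' t - g' 0 - m * t) t := fun t =>
    ((((hg t).sub_const (g 0)).sub ((hasDerivAt_id' t).const_mul (g' 0))).sub
      ((hasDerivAt_pow 2 t).const_mul (m / 2))).congr_deriv (by push_cast; ring)
  have hk'_mono : MonotoneOn (fun t => g' t - g' 0 - m * t) (Icc 0 1) :=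
    monotoneOn_of_hasDerivWithinAt_nonneg (convex_Icc 0 1)
      (fun t _ => (hk' t).continuousAt.continuousWithinAt) (fun t _ => (hk' t).hasDerivWithinAt)
      (fun t ht => sub_nonneg.2 (hm t (interior_subset ht)))
  have hk_mono : MonotoneOn (fun t => g t - g 0 - g' 0 * t - m / 2 * t ^ 2) (Icc 0 1) :=
    monotoneOn_of_hasDerivWithinAt_nonneg (convex_Icc 0 1)
      (fun t _ => (hk t).continuousAt.continuousWithinAt) (fun t _ => (hk t).hasDerivWithinAt)
      (fun t ht => by
        simpa using hk'_mono (left_mem_Icc.2 zero_le_one) (interior_subset ht)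
          (interior_subset ht).1)
  have := hk_mono (left_mem_Icc.2 zero_le_one) (right_mem_Icc.2 zero_le_one) zero_le_one
  simp only at this
  linarith

theorem add_fderiv_add_half_le_of_dist_fderiv_fderiv_le {E : Type*} [NormedAddCommGroup E]
    [NormedSpace ℝ E] {F : E → ℝ} (hF : ContDiff ℝ 2 F) {p h : E} {η : ℝ}
    (hη : ∀ t ∈ Icc (0 : ℝ) 1,
      dist (fderiv ℝ (fderiv ℝ F) (p + t • h)) (fderiv ℝ (fderiv ℝ F) p) ≤ η) :
    F p + fderiv ℝ F p h + (fderiv ℝ (fderiv ℝ F) p h h - η * ‖h‖ ^ 2) / 2 ≤ F (p + h) := by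
  have hline : ∀ t : ℝ, HasDerivAt (fun t : ℝ => p + t • h) h t := fun t => by
    simpa using ((hasDerivAt_id t).smul_const h).const_add p
  have hF1 : Differentiable ℝ F := hF.differentiable two_ne_zero
  have hF2 : Differentiable ℝ (fderiv ℝ F) :=
    (hF.fderiv_right (m := 1) le_rfl).differentiable one_ne_zero
  have hg : ∀ t : ℝ, HasDerivAt (fun t => F (p + t • h)) (fderiv ℝ F (p + t • h) h) t :=
    fun t => (hF1 _).hasFDerivAt.comp_hasDerivAt t (hline t)
  have hg' : ∀ t : ℝ, HasDerivAt (fun t => fderiv ℝ F (p + t • h) h)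
      (fderiv ℝ (fderiv ℝ F) (p + t • h) h h) t := fun t => by
    simpa using ((hF2 _).hasFDerivAt.comp_hasDerivAt t (hline t)).clm_apply (hasDerivAt_const t h)
  have hm : ∀ t ∈ Icc (0 : ℝ) 1,
      fderiv ℝ (fderiv ℝ F) p h h - η * ‖h‖ ^ 2 ≤ fderiv ℝ (fderiv ℝ F) (p + t • h) h h := by
    intro t ht
    have hnorm :=
      dist_eq_norm (fderiv ℝ (fderiv ℝ F) (p + t • h)) (fderiv ℝ (fderiv ℝ F) p) ▸ hη t ht
    have := ((fderiv ℝ (fderiv ℝ F) (p + t • h) - fderiv ℝ (fderiv ℝ F) p).le_opNorm₂ h h).trans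
      (mul_le_mul_of_nonneg_right (mul_le_mul_of_nonneg_right hnorm (norm_nonneg h))
        (norm_nonneg h))
    rw [Real.norm_eq_abs, abs_le] at this
    rw [FunLike.coe_sub, Pi.sub_apply, FunLike.coe_sub, Pi.sub_apply] at this
    nlinarith [this.1]
  simpa using add_add_half_le_of_le_deriv2 hg hg' hm

theorem sq_intervalIntegral_le_mul_intervalIntegral_sq {a b : ℝ} {g : ℝ → ℝ} (hab : a ≤ b)
    (hg : Continuous g) : (∫ x in a..b, g x) ^ 2 ≤ (b - a) * ∫ x in a..b, g x ^ 2 := by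
  have hg2 : IntervalIntegrable (fun x => g x ^ 2) volume a b := (hg.pow 2).intervalIntegrable a b
  -- `∫ (g - r)² ≥ 0` for all `r`: a quadratic in `r` with nonpositive discriminant
  have hquad : ∀ r : ℝ, 0 ≤ (b - a) * (r * r) + (-2 * ∫ x in a..b, g x) * r
      + ∫ x in a..b, g x ^ 2 := fun r => by
    have hg1 : IntervalIntegrable (fun x => 2 * r * g x) volume a b :=
      (hg.intervalIntegrable a b).const_mul _
    have h := intervalIntegral.integral_nonneg (μ := volume) hab fun x _ => sq_nonneg (g x - r)
    have hexp : (fun x => (g x - r) ^ 2) = fun x => g x ^ 2 - 2 * r * g x + r ^ 2 := by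
      ext x; ring
    rw [hexp, intervalIntegral.integral_add (hg2.sub hg1) intervalIntegrable_const,
      intervalIntegral.integral_sub hg2 hg1, intervalIntegral.integral_const_mul,
      intervalIntegral.integral_const, smul_eq_mul] at h
    linarith
  have := discrim_le_zero hquad
  rw [discrim] at this
  linarith

theorem intervalIntegral_sq_le_of_eq_zero {a b : ℝ} {u : ℝ → ℝ} (hab : a ≤ b)
    (hu : ContDiff ℝ 1 u) (ha : u a = 0) :
    ∫ x in a..b, u x ^ 2 ≤ (b - a) ^ 2 * ∫ x in a..b, deriv u x ^ 2 := by
  have hu' : Continuous (deriv u) := hu.continuous_deriv le_rfl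
  have hI : ∀ x ∈ Icc a b, ∫ t in a..x, deriv u t ^ 2 ≤ ∫ t in a..b, deriv u t ^ 2 :=
    fun x hx => intervalIntegral.integral_mono_interval le_rfl hx.1 hx.2
      (Filter.Eventually.of_forall fun _ => sq_nonneg _) ((hu'.pow 2).intervalIntegrable a b)
  have hpt : ∀ x ∈ Icc a b, u x ^ 2 ≤ (b - a) * ∫ t in a..b, deriv u t ^ 2 := fun x hx => by
    have hftc : u x = ∫ t in a..x, deriv u t := by
      rw [intervalIntegral.integral_deriv_eq_sub
        (fun t _ => (hu.differentiable one_ne_zero) t) (hu'.intervalIntegrable a x), ha, sub_zero]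
    calc u x ^ 2 ≤ (x - a) * ∫ t in a..x, deriv u t ^ 2 :=
          hftc ▸ sq_intervalIntegral_le_mul_intervalIntegral_sq hx.1 hu'
      _ ≤ (b - a) * ∫ t in a..b, deriv u t ^ 2 :=
        mul_le_mul (by linarith [hx.2]) (hI x hx)
          (intervalIntegral.integral_nonneg hx.1 fun _ _ => sq_nonneg _) (by linarith [hx.1])
  calc ∫ x in a..b, u x ^ 2 ≤ ∫ _ in a..b, (b - a) * ∫ t in a..b, deriv u t ^ 2 :=
        intervalIntegral.integral_mono_on hab (((hu.continuous).pow 2).intervalIntegrable a b)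
          intervalIntegrable_const hpt
    _ = (b - a) ^ 2 * ∫ x in a..b, deriv u x ^ 2 := by
        rw [intervalIntegral.integral_const, smul_eq_mul]; ring

theorem IsCompact.exists_pos_forall_dist_lt {α β : Type*} [PseudoMetricSpace α]
    [PseudoMetricSpace β] {s : Set α} (hs : IsCompact s) {g : α → β} (hg : Continuous g)
    {η : ℝ} (hη : 0 < η) : ∃ δ > 0, ∀ p ∈ s, ∀ q, dist p q < δ → dist (g p) (g q) < η := by
  obtain ⟨δ, hδ, h⟩ := Metric.mem_uniformity_dist.1
    (hs.uniformContinuousAt_of_continuousAt g (fun _ _ => hg.continuousAt)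
      (Metric.dist_mem_uniformity hη))
  exact ⟨δ, hδ, fun p hp q hpq => h hpq hp⟩

theorem intervalIntegral_le_of_le_add_deriv {a b : ℝ} {g h W W' : ℝ → ℝ} (hab : a ≤ b)
    (hg : IntervalIntegrable g volume a b) (hh : IntervalIntegrable h volume a b)
    (hW : ∀ x, HasDerivAt W (W' x) x) (hW' : IntervalIntegrable W' volume a b) (hWab : W a = W b)
    (hle : ∀ x ∈ Icc a b, h x + W' x ≤ g x) : ∫ x in a..b, h x ≤ ∫ x in a..b, g x := by
  have hW'0 : ∫ x in a..b, W' x = 0 := by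
    rw [intervalIntegral.integral_eq_sub_of_hasDerivAt (fun x _ => hW x) hW', hWab, sub_self]
  calc ∫ x in a..b, h x = ∫ x in a..b, (h x + W' x) := by
        rw [intervalIntegral.integral_add hh hW', hW'0, add_zero]
    _ ≤ ∫ x in a..b, g x := intervalIntegral.integral_mono_on hab (hh.add hW') hg hle

theorem intervalIntegral_mul_sq_add_mul_sq {a b : ℝ} {u v : ℝ → ℝ} (hu : Continuous u)
    (hv : Continuous v) (α β : ℝ) :
    ∫ x in a..b, (α * u x ^ 2 + β * v x ^ 2)
      = α * (∫ x in a..b, u x ^ 2) + β * ∫ x in a..b, v x ^ 2 := by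
  rw [intervalIntegral.integral_add (f := fun x => α * u x ^ 2) (g := fun x => β * v x ^ 2)
    (((hu.pow 2).intervalIntegrable a b).const_mul α)
    (((hv.pow 2).intervalIntegrable a b).const_mul β), intervalIntegral.integral_const_mul,
    intervalIntegral.integral_const_mul]

theorem H1normSq_eq_add {a b : ℝ} {u : ℝ → ℝ} (hu : ContDiff ℝ 1 u) :
    H1normSq a b u = (∫ x in a..b, u x ^ 2) + ∫ x in a..b, deriv u x ^ 2 :=
  intervalIntegral.integral_add ((hu.continuous.pow 2).intervalIntegrable a b)
    (((hu.continuous_deriv le_rfl).pow 2).intervalIntegrable a b)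

theorem pi_sq_mul_div_mul_one_add_sq_lt {p L : ℝ} (hp : 0 < p) (hL : 0 < L) :
    Real.pi ^ 2 * p / (2 * (Real.pi ^ 2 + 16 * L ^ 2)) * (1 + L ^ 2) < p / 2 := by
  have hpi : Real.pi ^ 2 < 16 := by nlinarith [Real.pi_pos, Real.pi_lt_four]
  rw [div_mul_eq_mul_div, div_lt_iff₀ (by positivity)]
  nlinarith [mul_pos hp (mul_pos (sub_pos.2 hpi) (pow_pos hL 2))]

section PartialDerivatives

variable {E : Type*} [NormedAddCommGroup E] [NormedSpace ℝ E] {G : ℝ × ℝ × ℝ → E} {x y z : ℝ}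

theorem DifferentiableAt.hasDerivAt_partial₂ (hG : DifferentiableAt ℝ G (x, y, z)) :
    HasDerivAt (fun u => G (x, u, z)) (fderiv ℝ G (x, y, z) (0, 1, 0)) y :=
  hG.hasFDerivAt.comp_hasDerivAt y
    ((hasDerivAt_const y x).prodMk ((hasDerivAt_id y).prodMk (hasDerivAt_const y z)))

theorem DifferentiableAt.hasDerivAt_partial₃ (hG : DifferentiableAt ℝ G (x, y, z)) :
    HasDerivAt (fun u => G (x, y, u)) (fderiv ℝ G (x, y, z) (0, 0, 1)) z :=
  hG.hasFDerivAt.comp_hasDerivAt z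
    ((hasDerivAt_const z x).prodMk ((hasDerivAt_const z y).prodMk (hasDerivAt_id z)))

theorem ContDiff.deriv_fderiv_apply_partial₂ {F : ℝ × ℝ × ℝ → ℝ} (hF : ContDiff ℝ 2 F)
    (v : ℝ × ℝ × ℝ) :
    deriv (fun u => fderiv ℝ F (x, u, z) v) y = fderiv ℝ (fderiv ℝ F) (x, y, z) (0, 1, 0) v := by
  have hF2 : Differentiable ℝ (fderiv ℝ F) :=
    (hF.fderiv_right (m := 1) le_rfl).differentiable one_ne_zero
  simpa using ((hF2 _).hasDerivAt_partial₂.clm_apply (hasDerivAt_const y v)).deriv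

theorem ContDiff.deriv_fderiv_apply_partial₃ {F : ℝ × ℝ × ℝ → ℝ} (hF : ContDiff ℝ 2 F)
    (v : ℝ × ℝ × ℝ) :
    deriv (fun u => fderiv ℝ F (x, y, u) v) z = fderiv ℝ (fderiv ℝ F) (x, y, z) (0, 0, 1) v := by
  have hF2 : Differentiable ℝ (fderiv ℝ F) :=
    (hF.fderiv_right (m := 1) le_rfl).differentiable one_ne_zero
  simpa using ((hF2 _).hasDerivAt_partial₃.clm_apply (hasDerivAt_const z v)).deriv

end PartialDerivatives

def uncurry3 (f : ℝ → ℝ → ℝ → ℝ) : ℝ × ℝ × ℝ → ℝ := fun pt => f pt.1 pt.2.1 pt.2.2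

section Uncurried

variable {f : ℝ → ℝ → ℝ → ℝ} {x y z : ℝ}

theorem fy_eq_fderiv (hf : Differentiable ℝ (uncurry3 f)) :
    fy f x y z = fderiv ℝ (uncurry3 f) (x, y, z) (0, 1, 0) :=
  (hf _).hasDerivAt_partial₂.deriv

theorem fz_eq_fderiv (hf : Differentiable ℝ (uncurry3 f)) :
    fz f x y z = fderiv ℝ (uncurry3 f) (x, y, z) (0, 0, 1) :=
  (hf _).hasDerivAt_partial₃.deriv

theorem fyy_eq_fderiv_fderiv (hf : ContDiff ℝ 2 (uncurry3 f)) :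
    fyy f x y z = fderiv ℝ (fderiv ℝ (uncurry3 f)) (x, y, z) (0, 1, 0) (0, 1, 0) := by
  simp only [fyy, fy_eq_fderiv (hf.differentiable two_ne_zero)]
  exact hf.deriv_fderiv_apply_partial₂ _

theorem fyz_eq_fderiv_fderiv (hf : ContDiff ℝ 2 (uncurry3 f)) :
    fyz f x y z = fderiv ℝ (fderiv ℝ (uncurry3 f)) (x, y, z) (0, 1, 0) (0, 0, 1) := by
  simp only [fyz, fz_eq_fderiv (hf.differentiable two_ne_zero)]
  exact hf.deriv_fderiv_apply_partial₂ _

theorem fzz_eq_fderiv_fderiv (hf : ContDiff ℝ 2 (uncurry3 f)) :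
    fzz f x y z = fderiv ℝ (fderiv ℝ (uncurry3 f)) (x, y, z) (0, 0, 1) (0, 0, 1) := by
  simp only [fzz, fz_eq_fderiv (hf.differentiable two_ne_zero)]
  exact hf.deriv_fderiv_apply_partial₃ _

theorem contDiff_uncurry3_fz (hf : ContDiff ℝ 2 (uncurry3 f)) :
    ContDiff ℝ 1 (uncurry3 (fz f)) := by
  have : uncurry3 (fz f) = fun q => fderiv ℝ (uncurry3 f) q (0, 0, 1) :=
    funext fun _ => fz_eq_fderiv (hf.differentiable two_ne_zero)
  rw [this]
  exact (hf.fderiv_right (m := 1) le_rfl).clm_apply contDiff_const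

theorem ContDiff.comp_jet {g : ℝ → ℝ → ℝ → ℝ} (hg : ContDiff ℝ 1 (uncurry3 g)) {y : ℝ → ℝ}
    (hy : ContDiff ℝ 2 y) : ContDiff ℝ 1 (fun x => g x (y x) (deriv y x)) :=
  hg.comp (contDiff_id.prodMk ((hy.of_le one_le_two).prodMk (hy.deriv' (n := 1))))

theorem Continuous.comp_jet {g : ℝ → ℝ → ℝ → ℝ} (hg : Continuous (uncurry3 g)) {y : ℝ → ℝ}
    (hy : ContDiff ℝ 1 y) : Continuous (fun x => g x (y x) (deriv y x)) :=
  hg.comp (continuous_id.prodMk (hy.continuous.prodMk (hy.continuous_deriv le_rfl)))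

theorem Phi_sub_Phi (hf : Continuous (uncurry3 f)) {a b : ℝ} {y y₀ : ℝ → ℝ}
    (hy : ContDiff ℝ 1 y) (hy₀ : ContDiff ℝ 1 y₀) :
    Phi f a b y - Phi f a b y₀
      = ∫ x in a..b, (f x (y x) (deriv y x) - f x (y₀ x) (deriv y₀ x)) :=
  (intervalIntegral.integral_sub ((hf.comp_jet hy).intervalIntegrable a b)
    ((hf.comp_jet hy₀).intervalIntegrable a b)).symm

end Uncurried

theorem norm_zero_mk (U W : ℝ) : ‖((0, U, W) : ℝ × ℝ × ℝ)‖ = max |U| |W| := by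
  simp [Prod.norm_def]

theorem taylor_le_sub {f : ℝ → ℝ → ℝ → ℝ} (hf : ContDiff ℝ 2 (uncurry3 f)) {x Y V Y' V' η : ℝ}
    (hη : ∀ t ∈ Icc (0 : ℝ) 1,
      dist (fderiv ℝ (fderiv ℝ (uncurry3 f)) ((x, Y, V) + t • (0, Y' - Y, V' - V)))
        (fderiv ℝ (fderiv ℝ (uncurry3 f)) (x, Y, V)) ≤ η) :
    fy f x Y V * (Y' - Y) + fz f x Y V * (V' - V)
      + (fyy f x Y V * (Y' - Y) ^ 2 + 2 * fyz f x Y V * (Y' - Y) * (V' - V)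
        + fzz f x Y V * (V' - V) ^ 2 - η * ((Y' - Y) ^ 2 + (V' - V) ^ 2)) / 2
      ≤ f x Y' V' - f x Y V := by
  set U := Y' - Y
  set W := V' - V
  have hdir : ((0, U, W) : ℝ × ℝ × ℝ) = U • (0, 1, 0) + W • (0, 0, 1) := by simp
  have hD1 : fderiv ℝ (uncurry3 f) (x, Y, V) (0, U, W) = fy f x Y V * U + fz f x Y V * W := by
    rw [hdir, map_add, map_smul, map_smul, fy_eq_fderiv (hf.differentiable two_ne_zero),
      fz_eq_fderiv (hf.differentiable two_ne_zero), smul_eq_mul, smul_eq_mul, mul_comm U,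
      mul_comm W]
  have hsymm := (hf.contDiffAt (x := (x, Y, V))).isSymmSndFDerivAt (by simp) (0, 0, 1) (0, 1, 0)
  have hD2 : fderiv ℝ (fderiv ℝ (uncurry3 f)) (x, Y, V) (0, U, W) (0, U, W)
      = fyy f x Y V * U ^ 2 + 2 * fyz f x Y V * U * W + fzz f x Y V * W ^ 2 := by
    rw [hdir]
    simp only [map_add, map_smul, add_apply, smul_apply, smul_eq_mul, hsymm,
      fyy_eq_fderiv_fderiv hf, fyz_eq_fderiv_fderiv hf, fzz_eq_fderiv_fderiv hf]
    ring
  have hnorm : ‖((0, U, W) : ℝ × ℝ × ℝ)‖ ^ 2 ≤ U ^ 2 + W ^ 2 := by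
    rcases le_total |U| |W| with h | h
    · rw [norm_zero_mk, max_eq_right h, sq_abs]; nlinarith
    · rw [norm_zero_mk, max_eq_left h, sq_abs]; nlinarith
  have hη0 : 0 ≤ η := (hη 0 (left_mem_Icc.2 zero_le_one)).trans' dist_nonneg
  have key := add_fderiv_add_half_le_of_dist_fderiv_fderiv_le hf hη
  have hend : ((x, Y, V) + (0, U, W) : ℝ × ℝ × ℝ) = (x, Y', V') := by simp [U, W]
  rw [hD1, hD2, hend] at key
  change _ ≤ uncurry3 f (x, Y', V') - uncurry3 f (x, Y, V)
  nlinarith [mul_le_mul_of_nonneg_left hnorm hη0]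

theorem exists_pos_dist_fderiv_fderiv_lt {f : ℝ → ℝ → ℝ → ℝ} (hf : ContDiff ℝ 2 (uncurry3 f))
    {a b : ℝ} {y₀ : ℝ → ℝ} (hy₀ : ContDiff ℝ 2 y₀) {η : ℝ} (hη : 0 < η) :
    ∃ ε > 0, ∀ x ∈ Icc a b, ∀ U W : ℝ, max |U| |W| < ε → ∀ t ∈ Icc (0 : ℝ) 1,
      dist (fderiv ℝ (fderiv ℝ (uncurry3 f)) ((x, y₀ x, deriv y₀ x) + t • (0, U, W)))
        (fderiv ℝ (fderiv ℝ (uncurry3 f)) (x, y₀ x, deriv y₀ x)) < η := by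
  have hjet : Continuous fun x => ((x, y₀ x, deriv y₀ x) : ℝ × ℝ × ℝ) :=
    continuous_id.prodMk (hy₀.continuous.prodMk (hy₀.continuous_deriv one_le_two))
  obtain ⟨ε, hε, hclose⟩ :=
    ((isCompact_Icc (a := a) (b := b)).image hjet).exists_pos_forall_dist_lt
      ((hf.fderiv_right (m := 1) le_rfl).continuous_fderiv one_ne_zero) hη
  refine ⟨ε, hε, fun x hx U W hUW t ht => ?_⟩
  rw [dist_comm]
  refine hclose _ (mem_image_of_mem _ hx) _ ?_
  rw [dist_self_add_right, norm_smul, Real.norm_of_nonneg ht.1, norm_zero_mk]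
  exact (mul_le_of_le_one_left (le_max_of_le_left (abs_nonneg U)) ht.2).trans_lt hUW

theorem exists_pos_forall_le_Phi_sub {a b : ℝ} (hab : a ≤ b) {f : ℝ → ℝ → ℝ → ℝ}
    (hf : ContDiff ℝ 2 (uncurry3 f)) (hfyz : ContDiff ℝ 1 (uncurry3 (fyz f)))
    {y₀ : ℝ → ℝ} (hy₀ : ContDiff ℝ 2 y₀)
    (hEL : ∀ x ∈ Icc a b,
      fy f x (y₀ x) (deriv y₀ x) = deriv (fun t => fz f t (y₀ t) (deriv y₀ t)) x)
    {p q : ℝ} (hp : ∀ x ∈ Icc a b, p ≤ fzz f x (y₀ x) (deriv y₀ x))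
    (hq : ∀ x ∈ Icc a b,
      q ≤ fyy f x (y₀ x) (deriv y₀ x) - deriv (fun t => fyz f t (y₀ t) (deriv y₀ t)) x)
    {η : ℝ} (hη : 0 < η) :
    ∃ ε > 0, ∀ y : ℝ → ℝ, ContDiff ℝ 1 y → y a = y₀ a → y b = y₀ b →
      (∀ x ∈ Icc a b, max |y x - y₀ x| |deriv y x - deriv y₀ x| < ε) →
      ((q - η) * (∫ x in a..b, (y x - y₀ x) ^ 2)
          + (p - η) * ∫ x in a..b, (deriv y x - deriv y₀ x) ^ 2) / 2
        ≤ Phi f a b y - Phi f a b y₀ := by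
  obtain ⟨ε, hε, hD2⟩ := exists_pos_dist_fderiv_fderiv_lt hf hy₀ (a := a) (b := b) hη
  refine ⟨ε, hε, fun y hy hya hyb hclose => ?_⟩
  set u := fun x => y x - y₀ x
  set u' := fun x => deriv y x - deriv y₀ x
  set φ := fun t => fz f t (y₀ t) (deriv y₀ t)
  set ψ := fun t => fyz f t (y₀ t) (deriv y₀ t)
  have hφ : ContDiff ℝ 1 φ := (contDiff_uncurry3_fz hf).comp_jet hy₀
  have hψ : ContDiff ℝ 1 ψ := hfyz.comp_jet hy₀
  have hu : ∀ x, HasDerivAt u (u' x) x := fun x =>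
    ((hy.differentiable one_ne_zero x).hasDerivAt).sub
      ((hy₀.differentiable two_ne_zero x).hasDerivAt)
  -- The derivative of `φ u + ψ u² / 2` absorbs the first variation (by the Euler–Lagrange
  -- equation) and the mixed term `f_yz u u'`, and its integral vanishes.
  set W' := fun x => deriv φ x * u x + φ x * u' x + deriv ψ x * u x ^ 2 / 2 + ψ x * u x * u' x
  have hW : ∀ x, HasDerivAt (fun x => φ x * u x + ψ x * u x ^ 2 / 2) (W' x) x := fun x => by
    have hφx := (hφ.differentiable one_ne_zero x).hasDerivAt
    have hψx := (hψ.differentiable one_ne_zero x).hasDerivAt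
    exact ((hφx.mul (hu x)).add ((hψx.mul ((hu x).pow 2)).div_const 2)).congr_deriv
      (by simp only [W', Pi.pow_apply]; push_cast; ring)
  have hpt : ∀ x ∈ Icc a b, ((q - η) * u x ^ 2 + (p - η) * u' x ^ 2) / 2 + W' x
      ≤ f x (y x) (deriv y x) - f x (y₀ x) (deriv y₀ x) := fun x hx => by
    have htaylor := taylor_le_sub hf (Y' := y x) (V' := deriv y x)
      (fun t ht => (hD2 x hx _ _ (hclose x hx) t ht).le)
    have hpx := mul_le_mul_of_nonneg_right (hp x hx) (sq_nonneg (u' x))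
    have hqx := mul_le_mul_of_nonneg_right (hq x hx) (sq_nonneg (u x))
    simp only [W', φ, ψ, ← hEL x hx]
    nlinarith
  have hu_c : Continuous u := hy.continuous.sub hy₀.continuous
  have hu'_c : Continuous u' := (hy.continuous_deriv le_rfl).sub (hy₀.continuous_deriv one_le_two)
  have hΔ_c := (hf.continuous.comp_jet hy).sub (hf.continuous.comp_jet (hy₀.of_le one_le_two))
  have := hφ.continuous; have := hψ.continuous
  have := hφ.continuous_deriv le_rfl; have := hψ.continuous_deriv le_rfl
  rw [Phi_sub_Phi hf.continuous hy (hy₀.of_le one_le_two),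
    ← intervalIntegral_mul_sq_add_mul_sq hu_c hu'_c, ← intervalIntegral.integral_div]
  exact intervalIntegral_le_of_le_add_deriv hab
    (hΔ_c.intervalIntegrable a b)
    ((by fun_prop : Continuous _).intervalIntegrable a b) hW
    ((by fun_prop : Continuous W').intervalIntegrable a b) (by simp [u, hya, hyb]) hpt

theorem statement9
    (a b : ℝ) (hab : a < b)
    (f : ℝ → ℝ → ℝ → ℝ)
    (hf : ContDiff ℝ 2 (fun pt : ℝ × ℝ × ℝ => f pt.1 pt.2.1 pt.2.2))
    (hfyz : ContDiff ℝ 1 (fun pt : ℝ × ℝ × ℝ => fyz f pt.1 pt.2.1 pt.2.2))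
    (y₀ : ℝ → ℝ) (hy₀ : ContDiff ℝ 2 y₀)
    (hEL : ∀ x ∈ Set.Icc a b,
      fy f x (y₀ x) (deriv y₀ x) - deriv (fun t => fz f t (y₀ t) (deriv y₀ t)) x = 0)
    (p q : ℝ)
    (hp : IsLeast ((fun x => fzz f x (y₀ x) (deriv y₀ x)) '' Set.Icc a b) p)
    (hq : IsLeast ((fun x => fyy f x (y₀ x) (deriv y₀ x)
            - deriv (fun t => fyz f t (y₀ t) (deriv y₀ t)) x) '' Set.Icc a b) q)
    (hppos : 0 < p) (hqnonneg : 0 ≤ q) :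
    ∃ ε > 0, ∀ y : ℝ → ℝ, ContDiff ℝ 1 y → y a = y₀ a → y b = y₀ b →
      (∀ x ∈ Set.Icc a b, max |y x - y₀ x| |deriv y x - deriv y₀ x| < ε) →
      Phi f a b y - Phi f a b y₀ ≥
        Real.pi ^ 2 * p / (2 * (Real.pi ^ 2 + 16 * (b - a) ^ 2)) *
          H1normSq a b (fun x => y x - y₀ x) := by
  set c := Real.pi ^ 2 * p / (2 * (Real.pi ^ 2 + 16 * (b - a) ^ 2))
  have hc := pi_sq_mul_div_mul_one_add_sq_lt hppos (sub_pos.2 hab)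
  set η := p / (1 + (b - a) ^ 2) - 2 * c
  have hη : (c + η / 2) * (1 + (b - a) ^ 2) = p / 2 := by simp only [η]; field_simp; ring
  obtain ⟨ε, hε, hmain⟩ := exists_pos_forall_le_Phi_sub hab.le hf hfyz hy₀
    (fun x hx => sub_eq_zero.1 (hEL x hx)) (fun x hx => hp.2 (mem_image_of_mem _ hx))
    (fun x hx => hq.2 (mem_image_of_mem _ hx)) (η := η) (by nlinarith)
  refine ⟨ε, hε, fun y hy hya hyb hclose => ?_⟩
  have hu : ContDiff ℝ 1 fun x => y x - y₀ x := hy.sub (hy₀.of_le one_le_two)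
  have hderiv : deriv (fun x => y x - y₀ x) = fun x => deriv y x - deriv y₀ x := funext fun x =>
    deriv_sub (hy.differentiable one_ne_zero x) (hy₀.differentiable two_ne_zero x)
  have hpoincare := intervalIntegral_sq_le_of_eq_zero hab.le hu (by simp [hya])
  have hI₁ : 0 ≤ ∫ x in a..b, (y x - y₀ x) ^ 2 :=
    intervalIntegral.integral_nonneg hab.le fun _ _ => sq_nonneg _
  rw [H1normSq_eq_add hu]
  simp only [hderiv] at hpoincare ⊢
  linarith [hmain y hy hya hyb hclose, mul_nonneg hqnonneg hI₁,
    mul_le_mul_of_nonneg_left hpoincare (by nlinarith : 0 ≤ c + η / 2),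
    congrArg (· * ∫ x in a..b, (deriv y x - deriv y₀ x) ^ 2) hη]
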